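/- Convergence of ProxPnP-αPGD: let f : ℝⁿ → ℝ be convex, differentiable with ∇f L_f-Lipschitz, and bounded below; let λ > 0; let 0 ≤ M < 1 and let φ : ℝⁿ → ℝ be M-weakly convex and bounded below; assume λ·L_f·M < 1 and let α satisfy M < α < 1/(λL_f) with α < 1. Set F = λf + φ with lower bound F*. Let (q_k), (x_k), (y_k) satisfy, for all k ≥ 0: q_{k+1} = (1−α)y_k + α·x_k; x_{k+1} a minimizer over ℝⁿ of u ↦ φ(u) + (1/2)‖u − (x_k − λ·∇f(q_{k+1}))‖²; y_{k+1} = (1−α)y_k + α·x_{k+1}. Then with δ = (α/2)(1 − 1/α)²: (i) the sequence E_k = F(y_k) + δ‖y_k − y_{k−1}‖² is non-increasing and converges; (ii) Σ_{k=1}^∞ ‖y_{k+1} − y_k‖² < ∞ and min_{1 ≤ k ≤ K} ‖y_{k+1} − y_k‖² ≤ (E_1 − F*)/((γ − δ)·K) for all K ≥ 1, where γ = (1/α)(1/2 − M(2−α)/2). -/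

import Mathlib

/-!
The energy `E_k = F(y_k) + δ‖y_k - y_{k-1}‖²` is a Lyapunov function: one step lowers it by at
least `(γ - δ)‖y_{k+1} - y_k‖²`. This comes from adding up `λ` times the convexity-plus-descent
bound for `f` at `q_{k+1}`, `α` times the three-point inequality of the proximal step (whose
objective is `(1 - M)`-strongly convex), and the `M`-weak convexity of `φ` at
`y_{k+1} = (1 - α) y_k + α x_{k+1}`. As `γ - δ = (2 - α)(α - M) / (2α) > 0`, telescoping and the
lower bound `F*` give monotonicity, summability and the `O(1/K)` rate.
-/

open RealInnerProductSpace Set Filter Topology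

section StrongConvexity

variable {V : Type*} [NormedAddCommGroup V] [InnerProductSpace ℝ V]

theorem StrongConvexOn.add_sq_norm_sub_le_of_isMinOn {ψ : V → ℝ} {m : ℝ} {p : V}
    (hψ : StrongConvexOn univ m ψ) (hp : IsMinOn ψ univ p) (u : V) :
    ψ p + m / 2 * ‖u - p‖ ^ 2 ≤ ψ u := by
  have key : ∀ t ∈ Ioo (0 : ℝ) 1, ψ p + (1 - t) * (m / 2 * ‖u - p‖ ^ 2) ≤ ψ u := by
    rintro t ⟨ht0, ht1⟩
    have hmin := isMinOn_univ_iff.1 hp ((1 - t) • p + t • u)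
    have hconv := hψ.2 (mem_univ p) (mem_univ u) (sub_nonneg.2 ht1.le) ht0.le (sub_add_cancel 1 t)
    rw [smul_eq_mul, smul_eq_mul, norm_sub_rev] at hconv
    nlinarith
  have hlim : Tendsto (fun t : ℝ => ψ p + (1 - t) * (m / 2 * ‖u - p‖ ^ 2)) (𝓝[>] 0)
      (𝓝 (ψ p + m / 2 * ‖u - p‖ ^ 2)) := by
    have hcont : Continuous fun t : ℝ => ψ p + (1 - t) * (m / 2 * ‖u - p‖ ^ 2) := by fun_prop
    simpa using (hcont.tendsto 0).mono_left nhdsWithin_le_nhds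
  exact le_of_tendsto hlim (eventually_of_mem (Ioo_mem_nhdsGT one_pos) key)

theorem StrongConvexOn.add_half_sq_norm_sub {φ : V → ℝ} {m : ℝ}
    (hφ : StrongConvexOn univ m φ) (z : V) :
    StrongConvexOn univ (m + 1) (fun u => φ u + 1 / 2 * ‖u - z‖ ^ 2) := by
  rw [strongConvexOn_iff_convex] at hφ ⊢
  have hsplit : (fun u => φ u + 1 / 2 * ‖u - z‖ ^ 2 - (m + 1) / 2 * ‖u‖ ^ 2) =
      (fun u => φ u - m / 2 * ‖u‖ ^ 2) + (⇑(-innerₛₗ ℝ z) + fun _ => 1 / 2 * ‖z‖ ^ 2) := by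
    funext u
    simp only [Pi.add_apply, LinearMap.neg_apply, innerₛₗ_apply_apply, norm_sub_sq_real,
      real_inner_comm z]
    ring
  rw [hsplit]
  exact hφ.add ((LinearMap.convexOn _ convex_univ).add (convexOn_const _ convex_univ))

theorem StrongConvexOn.inner_add_sq_le_of_isMinOn_prox {φ : V → ℝ} {m : ℝ}
    (hφ : StrongConvexOn univ m φ) {x g p : V}
    (hp : IsMinOn (fun u => φ u + 1 / 2 * ‖u - (x - g)‖ ^ 2) univ p) (u : V) :
    φ p + ⟪g, p - u⟫ + 1 / 2 * ‖p - x‖ ^ 2 + (m + 1) / 2 * ‖u - p‖ ^ 2 ≤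
      φ u + 1 / 2 * ‖u - x‖ ^ 2 := by
  have h := (hφ.add_half_sq_norm_sub (x - g)).add_sq_norm_sub_le_of_isMinOn hp u
  have hexpand : ∀ w : V, ‖w - (x - g)‖ ^ 2 = ‖w - x‖ ^ 2 + 2 * ⟪g, w - x⟫ + ‖g‖ ^ 2 := by
    intro w
    rw [show w - (x - g) = (w - x) + g by abel, norm_add_sq_real, real_inner_comm]
  have hsplit : ⟪g, p - u⟫ = ⟪g, p - x⟫ - ⟪g, u - x⟫ := by
    rw [← inner_sub_right, sub_sub_sub_cancel_right]
  simp only [hexpand] at h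
  linarith

end StrongConvexity

section Smooth

variable {V : Type*} [NormedAddCommGroup V] [InnerProductSpace ℝ V] [CompleteSpace V]

theorem HasGradientAt.hasDerivAt_comp_add_smul {f : V → ℝ} {g a v : V} {t : ℝ}
    (hf : HasGradientAt f g (a + t • v)) :
    HasDerivAt (fun s : ℝ => f (a + s • v)) ⟪g, v⟫ t := by
  have hline : HasDerivAt (fun s : ℝ => a + s • v) v t := by
    simpa using ((hasDerivAt_id t).smul_const v).const_add a
  simpa [InnerProductSpace.toDual_apply_apply, Function.comp_def] using
    hf.hasFDerivAt.comp_hasDerivAt t hline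

theorem ConvexOn.add_inner_le_of_hasGradientAt {f : V → ℝ} {g a : V}
    (hf : ConvexOn ℝ univ f) (hg : HasGradientAt f g a) (b : V) :
    f a + ⟪g, b - a⟫ ≤ f b := by
  have hconv : ConvexOn ℝ univ (fun s : ℝ => f (a + s • (b - a))) := by
    simpa [Function.comp_def, AffineMap.lineMap_apply_module', add_comm] using
      hf.comp_affineMap (AffineMap.lineMap a b)
  have hderiv : HasDerivAt (fun s : ℝ => f (a + s • (b - a))) ⟪g, b - a⟫ 0 :=
    HasGradientAt.hasDerivAt_comp_add_smul (by simpa using hg)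
  have hslope := hconv.le_slope_of_hasDerivAt (mem_univ 0) (mem_univ 1) zero_lt_one hderiv
  simp only [slope_def_field, one_smul, add_sub_cancel, zero_smul, add_zero, sub_zero,
    div_one] at hslope
  linarith

theorem le_add_inner_add_sq_of_gradient_lipschitz {f : V → ℝ} {f' : V → V} {L : ℝ}
    (hf : ∀ x, HasGradientAt f (f' x) x) (hlip : ∀ u v, ‖f' u - f' v‖ ≤ L * ‖u - v‖)
    (a b : V) : f b ≤ f a + ⟪f' a, b - a⟫ + L / 2 * ‖b - a‖ ^ 2 := by
  set v := b - a
  let h : ℝ → ℝ := fun t => f (a + t • v) - t * ⟪f' a, v⟫ - L / 2 * t ^ 2 * ‖v‖ ^ 2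
  have hderiv : ∀ t, HasDerivAt h (⟪f' (a + t • v), v⟫ - ⟪f' a, v⟫ - L * t * ‖v‖ ^ 2) t := by
    intro t
    refine ((((hf (a + t • v)).hasDerivAt_comp_add_smul).fun_sub
      ((hasDerivAt_id t).mul_const ⟪f' a, v⟫)).fun_sub
      (((hasDerivAt_pow 2 t).const_mul (L / 2)).mul_const (‖v‖ ^ 2))).congr_deriv ?_
    simp only [Nat.add_one_sub_one, pow_one, one_mul, Nat.cast_ofNat]
    ring
  have hanti : AntitoneOn h (Ici 0) := by
    refine antitoneOn_of_hasDerivWithinAt_nonpos (convex_Ici 0)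
      (fun t _ => (hderiv t).continuousAt.continuousWithinAt)
      (fun t _ => (hderiv t).hasDerivWithinAt) fun t ht => ?_
    rw [interior_Ici, mem_Ioi] at ht
    have hgrad : ‖f' (a + t • v) - f' a‖ ≤ L * (t * ‖v‖) := by
      simpa [norm_smul, abs_of_pos ht] using hlip (a + t • v) a
    calc ⟪f' (a + t • v), v⟫ - ⟪f' a, v⟫ - L * t * ‖v‖ ^ 2
        = ⟪f' (a + t • v) - f' a, v⟫ - L * t * ‖v‖ ^ 2 := by rw [inner_sub_left]
      _ ≤ ‖f' (a + t • v) - f' a‖ * ‖v‖ - L * t * ‖v‖ ^ 2 := by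
          gcongr; exact real_inner_le_norm _ _
      _ ≤ L * (t * ‖v‖) * ‖v‖ - L * t * ‖v‖ ^ 2 := by gcongr
      _ = 0 := by ring
  have h10 : h 1 ≤ h 0 := hanti (mem_Ici.2 le_rfl) (mem_Ici.2 zero_le_one) zero_le_one
  simp only [h, v, one_smul, add_sub_cancel, zero_smul, add_zero] at h10
  linarith

theorem le_add_inner_add_sq_of_convexOn_of_gradient_lipschitz {f : V → ℝ} {f' : V → V} {L : ℝ}
    (hf : ∀ x, HasGradientAt f (f' x) x) (hconv : ConvexOn ℝ univ f)
    (hlip : ∀ u v, ‖f' u - f' v‖ ≤ L * ‖u - v‖) (q y z : V) :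
    f z ≤ f y + ⟪f' q, z - y⟫ + L / 2 * ‖z - q‖ ^ 2 := by
  have hdescent := le_add_inner_add_sq_of_gradient_lipschitz hf hlip q z
  have hsupport := hconv.add_inner_le_of_hasGradientAt (hf q) y
  have hsplit : ⟪f' q, z - q⟫ = ⟪f' q, z - y⟫ + ⟪f' q, y - q⟫ := by
    rw [← inner_add_right, sub_add_sub_cancel]
  linarith

theorem alphaPGD_energy_descent {f φ : V → ℝ} {f' : V → V} {M L lam α : ℝ}
    (hf : ∀ x, HasGradientAt f (f' x) x) (hfconv : ConvexOn ℝ univ f)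
    (hlip : ∀ u v, ‖f' u - f' v‖ ≤ L * ‖u - v‖) (hlam : 0 ≤ lam)
    (hφ : StrongConvexOn univ (-M) φ) (hα0 : 0 < α) (hα1 : α ≤ 1) (hαL : α * (lam * L) ≤ 1)
    {y₀ y₁ y₂ x₁ x₂ : V} (hy₁ : y₁ = (1 - α) • y₀ + α • x₁) (hy₂ : y₂ = (1 - α) • y₁ + α • x₂)
    (hx₂ : IsMinOn (fun u => φ u + 1 / 2 * ‖u - (x₁ - lam • f' ((1 - α) • y₁ + α • x₁))‖ ^ 2)
      univ x₂) :
    lam * f y₂ + φ y₂ + 1 / α * (1 / 2 - M * (2 - α) / 2) * ‖y₂ - y₁‖ ^ 2 ≤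
      lam * f y₁ + φ y₁ + α / 2 * (1 - 1 / α) ^ 2 * ‖y₁ - y₀‖ ^ 2 := by
  set q := (1 - α) • y₁ + α • x₁
  have norm_smul_sq (c : ℝ) (v : V) : ‖c • v‖ ^ 2 = c ^ 2 * ‖v‖ ^ 2 := by
    rw [norm_smul, mul_pow, Real.norm_eq_abs, sq_abs]
  have hstep : ‖y₂ - y₁‖ ^ 2 = α ^ 2 * ‖y₁ - x₂‖ ^ 2 := by
    rw [show y₂ - y₁ = α • (x₂ - y₁) by rw [hy₂]; module, norm_smul_sq, norm_sub_rev]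
  have hmomentum : ‖y₁ - x₁‖ ^ 2 = ((1 - α) / α) ^ 2 * ‖y₁ - y₀‖ ^ 2 := by
    rw [show y₁ - x₁ = ((1 - α) / α) • (y₀ - y₁) by
      rw [hy₁]; match_scalars <;> field_simp <;> ring, norm_smul_sq, norm_sub_rev]
  have hsmooth : f y₂ ≤ f y₁ + α * ⟪f' q, x₂ - y₁⟫ + L / 2 * (α ^ 2 * ‖x₂ - x₁‖ ^ 2) := by
    have h := le_add_inner_add_sq_of_convexOn_of_gradient_lipschitz hf hfconv hlip q y₁ y₂
    rwa [show y₂ - y₁ = α • (x₂ - y₁) by rw [hy₂]; module, real_inner_smul_right,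
      show y₂ - q = α • (x₂ - x₁) by rw [hy₂]; module, norm_smul_sq] at h
  have hstepsize : lam * (L / 2 * (α ^ 2 * ‖x₂ - x₁‖ ^ 2)) ≤ α / 2 * ‖x₂ - x₁‖ ^ 2 := by
    nlinarith [mul_nonneg hα0.le (sq_nonneg ‖x₂ - x₁‖)]
  have hprox := hφ.inner_add_sq_le_of_isMinOn_prox hx₂ y₁
  rw [real_inner_smul_left] at hprox
  have hweak := hφ.2 (mem_univ y₁) (mem_univ x₂) (sub_nonneg.2 hα1) hα0.le (sub_add_cancel 1 α)
  rw [← hy₂, smul_eq_mul, smul_eq_mul] at hweak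
  have hγ : 1 / α * (1 / 2 - M * (2 - α) / 2) * ‖y₂ - y₁‖ ^ 2 =
      α / 2 * (1 - M * (2 - α)) * ‖y₁ - x₂‖ ^ 2 := by
    rw [hstep]; field_simp
  have hδ : α / 2 * (1 - 1 / α) ^ 2 * ‖y₁ - y₀‖ ^ 2 = α * (1 / 2 * ‖y₁ - x₁‖ ^ 2) := by
    rw [hmomentum]; field_simp; ring
  rw [hγ, hδ]
  linarith [mul_le_mul_of_nonneg_left hsmooth hlam, mul_le_mul_of_nonneg_left hprox hα0.le]

end Smooth

section Descent

variable {E d : ℕ → ℝ} {a c : ℝ}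

theorem antitone_of_descent (ha : 0 ≤ a) (hd : ∀ k, 0 ≤ d k)
    (h : ∀ k, E (k + 1) + a * d k ≤ E k) : Antitone E :=
  antitone_nat_of_succ_le fun k => by linarith [h k, mul_nonneg ha (hd k)]

theorem sum_range_le_of_descent (ha : 0 < a) (hc : ∀ k, c ≤ E k)
    (h : ∀ k, E (k + 1) + a * d k ≤ E k) (N : ℕ) :
    ∑ j ∈ Finset.range N, d j ≤ (E 0 - c) / a := by
  rw [le_div_iff₀' ha, Finset.mul_sum]
  calc ∑ j ∈ Finset.range N, a * d j ≤ ∑ j ∈ Finset.range N, (E j - E (j + 1)) :=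
        Finset.sum_le_sum fun j _ => by linarith [h j]
    _ = E 0 - E N := Finset.sum_range_sub' E N
    _ ≤ E 0 - c := by linarith [hc N]

theorem summable_of_descent (ha : 0 < a) (hc : ∀ k, c ≤ E k) (hd : ∀ k, 0 ≤ d k)
    (h : ∀ k, E (k + 1) + a * d k ≤ E k) : Summable d :=
  summable_of_sum_range_le hd (sum_range_le_of_descent ha hc h)

theorem exists_le_div_of_descent (ha : 0 < a) (hc : ∀ k, c ≤ E k)
    (h : ∀ k, E (k + 1) + a * d k ≤ E k) {K : ℕ} (hK : 1 ≤ K) :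
    ∃ j < K, d j ≤ (E 0 - c) / (a * K) := by
  obtain ⟨j, hj, hle⟩ := Finset.exists_le_of_sum_le ⟨0, Finset.mem_range.2 hK⟩
    (f := d) (g := fun _ => (E 0 - c) / (a * K)) <| by
      rw [Finset.sum_const, Finset.card_range, nsmul_eq_mul,
        show (K : ℝ) * ((E 0 - c) / (a * K)) = (E 0 - c) / a by field_simp]
      exact sum_range_le_of_descent ha hc h K
  exact ⟨j, Finset.mem_range.1 hj, hle⟩

end Descent

theorem proxPnP_alphaPGD_convergence_general {n : ℕ}
    (f : EuclideanSpace ℝ (Fin n) → ℝ)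
    (f' : EuclideanSpace ℝ (Fin n) → EuclideanSpace ℝ (Fin n))
    (φ : EuclideanSpace ℝ (Fin n) → ℝ) (M L_f lam α Fstar : ℝ)
    (hf : ∀ x, HasGradientAt f (f' x) x)
    (hfconv : ConvexOn ℝ Set.univ f)
    (hlip : ∀ u v, ‖f' u - f' v‖ ≤ L_f * ‖u - v‖)
    (hlam : 0 < lam)
    (hM0 : 0 ≤ M)
    (hφ : ConvexOn ℝ Set.univ (fun x => φ x + M / 2 * ‖x‖ ^ 2))
    (hαM : M < α) (hαlam : α * (lam * L_f) < 1) (hα1 : α < 1)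
    (F : EuclideanSpace ℝ (Fin n) → ℝ) (hF : ∀ x, F x = lam * f x + φ x)
    (hFstar : ∀ x, Fstar ≤ F x)
    (q x y : ℕ → EuclideanSpace ℝ (Fin n))
    (hq : ∀ k, q (k + 1) = (1 - α) • y k + α • x k)
    (hx : ∀ k, ∀ u,
      φ (x (k + 1)) + 1 / 2 * ‖x (k + 1) - (x k - lam • f' (q (k + 1)))‖ ^ 2 ≤
        φ u + 1 / 2 * ‖u - (x k - lam • f' (q (k + 1)))‖ ^ 2)
    (hy : ∀ k, y (k + 1) = (1 - α) • y k + α • x (k + 1))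
    (δ γ : ℝ)
    (hδ : δ = α / 2 * (1 - 1 / α) ^ 2)
    (hγ : γ = 1 / α * (1 / 2 - M * (2 - α) / 2))
    (E : ℕ → ℝ)
    (hE : ∀ k, E k = F (y (k + 1)) + δ * ‖y (k + 1) - y k‖ ^ 2) :
    ((∀ k, E (k + 1) ≤ E k) ∧ ∃ l : ℝ, Filter.Tendsto E Filter.atTop (nhds l)) ∧
    Summable (fun k : ℕ => ‖y (k + 2) - y (k + 1)‖ ^ 2) ∧
    (∀ K : ℕ, 1 ≤ K → ∃ k : ℕ, 1 ≤ k ∧ k ≤ K ∧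
      ‖y (k + 1) - y k‖ ^ 2 ≤ (E 0 - Fstar) / ((γ - δ) * K)) := by
  have hα0 : 0 < α := hM0.trans_lt hαM
  have hφ' : StrongConvexOn univ (-M) φ :=
    strongConvexOn_iff_convex.2 (by simpa [neg_div] using hφ)
  have hgap : 0 < γ - δ := by
    rw [hγ, hδ, show 1 / α * (1 / 2 - M * (2 - α) / 2) - α / 2 * (1 - 1 / α) ^ 2 =
      (2 - α) * (α - M) / (2 * α) by field_simp; ring]
    exact div_pos (mul_pos (by linarith) (by linarith)) (by linarith)
  have hdescent (k : ℕ) : E (k + 1) + (γ - δ) * ‖y (k + 2) - y (k + 1)‖ ^ 2 ≤ E k := by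
    have h := alphaPGD_energy_descent hf hfconv hlip hlam.le hφ' hα0 hα1.le hαlam.le (hy k)
      (hy (k + 1)) (hq (k + 1) ▸ isMinOn_univ_iff.2 (hx (k + 1)))
    rw [hE, hE, hF, hF, hδ]
    rw [hγ] at hgap ⊢
    linarith
  have hbound (k : ℕ) : Fstar ≤ E k := by
    have hinertia : 0 ≤ α / 2 * (1 - 1 / α) ^ 2 * ‖y (k + 1) - y k‖ ^ 2 := by positivity
    rw [hE, hδ]
    linarith [hFstar (y (k + 1))]
  have hd (k : ℕ) : 0 ≤ ‖y (k + 2) - y (k + 1)‖ ^ 2 := by positivity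
  have hanti := antitone_of_descent hgap.le hd hdescent
  refine ⟨⟨fun k => hanti k.le_succ, _, tendsto_atTop_ciInf hanti ⟨Fstar, ?_⟩⟩,
    summable_of_descent hgap hbound hd hdescent, fun K hK => ?_⟩
  · rintro _ ⟨k, rfl⟩
    exact hbound k
  · obtain ⟨j, hjK, hj⟩ := exists_le_div_of_descent hgap hbound hdescent hK
    exact ⟨j + 1, by omega, hjK, hj⟩

/-- Convergence of ProxPnP-αPGD: with `f` convex, differentiable, `∇f`
`L_f`-Lipschitz, bounded below; `λ > 0`; `0 ≤ M < 1`, `φ` `M`-weakly convex, bounded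
below; `λ·L_f·M < 1`, `M < α < 1/(λL_f)` (the latter stated as `α·(λ·L_f) < 1`), `α < 1`;
`F = λf + φ` with lower bound `F*`; and ProxPnP-αPGD iterates (stepsize `τ = 1`):
with `δ = (α/2)(1 − 1/α)²` and `γ = (1/α)(1/2 − M(2−α)/2)`:
(i) `E_k = F(y_k) + δ‖y_k − y_{k−1}‖²` (for `k ≥ 1`) is non-increasing and converges;
(ii) `Σ_{k≥1} ‖y_{k+1} − y_k‖² < ∞` and
`min_{1 ≤ k ≤ K} ‖y_{k+1} − y_k‖² ≤ (E_1 − F*)/((γ − δ)·K)` for all `K ≥ 1`. -/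
theorem proxPnP_alphaPGD_convergence {n : ℕ}
    (f : EuclideanSpace ℝ (Fin n) → ℝ)
    (f' : EuclideanSpace ℝ (Fin n) → EuclideanSpace ℝ (Fin n))
    (φ : EuclideanSpace ℝ (Fin n) → ℝ) (M L_f lam α Fstar : ℝ)
    (hf : ∀ x, HasGradientAt f (f' x) x)
    (hfconv : ConvexOn ℝ Set.univ f)
    (hlip : ∀ u v, ‖f' u - f' v‖ ≤ L_f * ‖u - v‖)
    (hfbd : ∃ c, ∀ x, c ≤ f x)
    (hlam : 0 < lam)
    (hM0 : 0 ≤ M) (hM1 : M < 1)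
    (hφ : ConvexOn ℝ Set.univ (fun x => φ x + M / 2 * ‖x‖ ^ 2))
    (hφbd : ∃ c, ∀ x, c ≤ φ x)
    (hcond : lam * L_f * M < 1)
    (hαM : M < α) (hαlam : α * (lam * L_f) < 1) (hα1 : α < 1)
    (F : EuclideanSpace ℝ (Fin n) → ℝ) (hF : ∀ x, F x = lam * f x + φ x)
    (hFstar : ∀ x, Fstar ≤ F x)
    (q x y : ℕ → EuclideanSpace ℝ (Fin n))
    (hq : ∀ k, q (k + 1) = (1 - α) • y k + α • x k)
    (hx : ∀ k, ∀ u,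
      φ (x (k + 1)) + 1 / 2 * ‖x (k + 1) - (x k - lam • f' (q (k + 1)))‖ ^ 2 ≤
        φ u + 1 / 2 * ‖u - (x k - lam • f' (q (k + 1)))‖ ^ 2)
    (hy : ∀ k, y (k + 1) = (1 - α) • y k + α • x (k + 1))
    (δ γ : ℝ)
    (hδ : δ = α / 2 * (1 - 1 / α) ^ 2)
    (hγ : γ = 1 / α * (1 / 2 - M * (2 - α) / 2))
    (E : ℕ → ℝ)
    (hE : ∀ k, E k = F (y (k + 1)) + δ * ‖y (k + 1) - y k‖ ^ 2) :
    ((∀ k, E (k + 1) ≤ E k) ∧ ∃ l : ℝ, Filter.Tendsto E Filter.atTop (nhds l)) ∧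
    Summable (fun k : ℕ => ‖y (k + 2) - y (k + 1)‖ ^ 2) ∧
    (∀ K : ℕ, 1 ≤ K → ∃ k : ℕ, 1 ≤ k ∧ k ≤ K ∧
      ‖y (k + 1) - y k‖ ^ 2 ≤ (E 0 - Fstar) / ((γ - δ) * K)) :=
  proxPnP_alphaPGD_convergence_general f f' φ M L_f lam α Fstar hf hfconv hlip hlam hM0 hφ hαM hαlam
    hα1 F hF hFstar q x y hq hx hy δ γ hδ hγ E hE
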